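/- (Effective additive Hilbert 90.) Let d := ord(y_G') (the order of the different of k[[t]]^G ⊆ k[[t]]), and let m, n be integers with m ≥ n and m − n ≥ d − #G + 1, so that I := t^m·k[[t]] ⊆ J := t^n·k[[t]] are fractional ideals of k[[t]] (both stable under all ρ(g)). Then every 1-cocycle with values in I becomes a coboundary in J: for every map a : G → I satisfying a_{gh} = ρ(g)(a_h) + a_g for all g, h ∈ G, there exists α ∈ J with a_g = ρ(g)(α) − α for all g ∈ G. In particular, the natural map H^1(G, I) → H^1(G, J) is zero. -/

import Mathlib

/-!
Write `y = ∏_g f_g` and `c = y / (t y')`. Since `y` is `G`-invariant, the chain rule gives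
`y' = ρ(g)(y') · f_g'`, hence `ρ(g)(c) = (∏_{h ≠ g} f_h) · f_g' / y'`, and by the product rule
these sum to `1`. Every `f_h` lies in `t k[[t]]`, so `ord ρ(g)(c) ≥ #G - 1 - d`. As in the
usual proof of additive Hilbert 90, an element of trace one splits every cocycle:
`α = -∑_h ρ(h)(c) a_h` satisfies `a_g = ρ(g)(α) - α`, and `ord α ≥ m + #G - 1 - d ≥ n`.
-/

open PowerSeries

/-- the canonical embedding `k[[t]] → k((t))`. -/
noncomputable def toL {k : Type} [Field k] (x : PowerSeries k) : LaurentSeries k :=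
  HahnSeries.ofPowerSeries ℤ k x

/-- `ord(x) ≥ n` for the `t`-adic valuation on `k((t))` (with `ord 0 = ∞`). -/
def ordGE {k : Type} [Field k] (x : LaurentSeries k) (n : ℤ) : Prop :=
  x = 0 ∨ n ≤ HahnSeries.order x

theorem Derivation.leibniz_prod {R A M : Type*} [CommSemiring R] [CommSemiring A]
    [AddCommMonoid M] [Algebra R A] [Module A M] [Module R M] (D : Derivation R A M)
    {ι : Type*} [DecidableEq ι] (s : Finset ι) (f : ι → A) :
    D (∏ i ∈ s, f i) = ∑ i ∈ s, (∏ j ∈ s.erase i, f j) • D (f i) := by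
  induction s using Finset.induction_on with
  | empty => simp
  | insert a s ha ih =>
    have herase : ∀ i ∈ s, (insert a s).erase i = insert a (s.erase i) := fun i hi =>
      Finset.erase_insert_of_ne fun h => ha (h ▸ hi)
    rw [Finset.prod_insert ha, D.leibniz, ih, Finset.sum_insert ha, Finset.erase_insert ha,
      Finset.smul_sum, add_comm]
    congr 1
    refine Finset.sum_congr rfl fun i hi => ?_
    rw [herase i hi, Finset.prod_insert fun h => ha (Finset.mem_of_mem_erase h), mul_smul]

namespace PowerSeries

variable {R : Type*} [CommRing R]

theorem coeff_algHom_apply_eq_coeff_algHom_apply_trunc (σ : R⟦X⟧ →ₐ[R] R⟦X⟧)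
    (hσ : constantCoeff (σ X) = 0) (f : R⟦X⟧) (n : ℕ) :
    coeff n (σ f) = coeff n (σ (trunc (n + 1) f : R⟦X⟧)) := by
  obtain ⟨y, hy⟩ : X ^ (n + 1) ∣ f - (trunc (n + 1) f : R⟦X⟧) :=
    X_pow_dvd_iff.mpr fun m hm => by simp [coeff_trunc, hm]
  have hdvd : X ^ (n + 1) ∣ σ (f - (trunc (n + 1) f : R⟦X⟧)) := by
    rw [hy, map_mul, map_pow]
    exact Dvd.dvd.mul_right (pow_dvd_pow_of_dvd (X_dvd_iff.mpr hσ) _) _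
  rw [← sub_eq_zero, ← map_sub, ← map_sub]
  exact X_pow_dvd_iff.mp hdvd n n.lt_succ_self

theorem algHom_apply_eq_subst (σ : R⟦X⟧ →ₐ[R] R⟦X⟧) (hσ : constantCoeff (σ X) = 0)
    (f : R⟦X⟧) : σ f = f.subst (σ X) := by
  have hs : HasSubst (σ X) := HasSubst.of_constantCoeff_zero' hσ
  have hτ : constantCoeff (substAlgHom hs (X : R⟦X⟧)) = 0 := by rwa [substAlgHom_X]
  have hpoly (p : Polynomial R) : σ p = substAlgHom hs (p : R⟦X⟧) := by
    have hC (r : R) : σ (C r) = C r := σ.commutes r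
    rw [substAlgHom_coe]
    induction p using Polynomial.induction_on <;> simp_all
  ext n
  calc coeff n (σ f) = coeff n (σ (trunc (n + 1) f : R⟦X⟧)) :=
        coeff_algHom_apply_eq_coeff_algHom_apply_trunc σ hσ f n
    _ = coeff n (substAlgHom hs f) := by
        rw [hpoly, coeff_algHom_apply_eq_coeff_algHom_apply_trunc _ hτ f n]
    _ = coeff n (f.subst (σ X)) := by rw [coe_substAlgHom]

theorem derivative_algHom_apply (σ : R⟦X⟧ →ₐ[R] R⟦X⟧) (hσ : constantCoeff (σ X) = 0)
    (f : R⟦X⟧) : d⁄dX R (σ f) = σ (d⁄dX R f) * d⁄dX R (σ X) := by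
  rw [algHom_apply_eq_subst σ hσ f, algHom_apply_eq_subst σ hσ (d⁄dX R f),
    derivative_subst (HasSubst.of_constantCoeff_zero' hσ)]

theorem constantCoeff_algEquiv_X {k : Type*} [Field k] (σ : k⟦X⟧ ≃ₐ[k] k⟦X⟧) :
    constantCoeff (σ X) = 0 := by
  by_contra h
  have hX : IsUnit (σ X) := isUnit_iff_constantCoeff.mpr (isUnit_iff_ne_zero.mpr h)
  simpa using isUnit_iff_constantCoeff.mp ((isUnit_map_iff σ X).mp hX)

end PowerSeries

section GroupAction

variable {G R A : Type*} [Group G] [Fintype G] [CommSemiring R]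

theorem algEquiv_apply_prod_orbit [CommSemiring A] [Algebra R A] (ρ : G →* (A ≃ₐ[R] A))
    (x : A) (g : G) : ρ g (∏ h, ρ h x) = ∏ h, ρ h x := by
  rw [map_prod]
  exact Fintype.prod_equiv (Equiv.mulLeft g) _ _ fun h => by simp [AlgEquiv.mul_apply]

theorem cocycle_eq_coboundary_of_sum_eq_one [CommRing A] [Algebra R A] (ρ : G →* (A ≃ₐ[R] A))
    {a : G → A} (ha : ∀ g h, a (g * h) = ρ g (a h) + a g) {c : A} (hc : ∑ g, ρ g c = 1)
    (g : G) : a g = ρ g (-∑ h, ρ h c * a h) - -∑ h, ρ h c * a h := by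
  have key : ρ g (∑ h, ρ h c * a h) = ∑ h, ρ h c * a h - a g :=
    calc ρ g (∑ h, ρ h c * a h) = ∑ h, ρ (g * h) c * (a (g * h) - a g) := by
          simp [map_sum, AlgEquiv.mul_apply, ha]
      _ = ∑ h, ρ h c * (a h - a g) :=
          Fintype.sum_equiv (Equiv.mulLeft g) _ _ fun _ => rfl
      _ = ∑ h, ρ h c * a h - a g := by
          simp only [mul_sub, Finset.sum_sub_distrib, ← Finset.sum_mul, hc, one_mul]
  rw [map_neg, key]
  ring

end GroupAction

section Order

variable {k : Type} [Field k]

theorem ordGE_iff_le_orderTop {x : LaurentSeries k} {r : ℤ} :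
    ordGE x r ↔ (r : WithTop ℤ) ≤ x.orderTop := by
  rcases eq_or_ne x 0 with rfl | hx
  · simp [ordGE]
  · simp [ordGE, hx, ← HahnSeries.order_eq_orderTop_of_ne_zero hx]

theorem ordGE.mono {x : LaurentSeries k} {r s : ℤ} (hx : ordGE x r) (hsr : s ≤ r) :
    ordGE x s := by
  rw [ordGE_iff_le_orderTop] at hx ⊢
  exact le_trans (WithTop.coe_le_coe.mpr hsr) hx

theorem ordGE.mul {x y : LaurentSeries k} {r s : ℤ} (hx : ordGE x r) (hy : ordGE y s) :
    ordGE (x * y) (r + s) := by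
  rw [ordGE_iff_le_orderTop] at hx hy ⊢
  rw [HahnSeries.orderTop_mul, WithTop.coe_add]
  exact add_le_add hx hy

variable (k) in
/-- The fractional ideal `t^r k[[t]]`. -/
def ordGESubgroup (r : ℤ) : AddSubgroup (LaurentSeries k) where
  carrier := {x | ordGE x r}
  zero_mem' := Or.inl rfl
  add_mem' {x y} hx hy := by
    simp only [Set.mem_ofPred_eq, ordGE_iff_le_orderTop] at hx hy ⊢
    exact le_trans (le_min hx hy) HahnSeries.min_orderTop_le_orderTop_add
  neg_mem' {x} hx := by
    simp only [Set.mem_ofPred_eq, ordGE_iff_le_orderTop, HahnSeries.orderTop_neg] at hx ⊢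
    exact hx

theorem ordGE_inv_of_coeff_ne_zero {x : LaurentSeries k} {r : ℤ} (hr : x.coeff r ≠ 0) :
    ordGE x⁻¹ (-r) := by
  have hx : x ≠ 0 := HahnSeries.ne_zero_of_coeff_ne_zero hr
  have hsum := HahnSeries.order_mul (inv_ne_zero hx) hx
  rw [inv_mul_cancel₀ hx, HahnSeries.order_one] at hsum
  have := HahnSeries.order_le_of_coeff_ne_zero hr
  exact Or.inr (by omega)

theorem toL_ne_zero {f : k⟦X⟧} (hf : f ≠ 0) : toL f ≠ 0 :=
  (map_ne_zero_iff _ HahnSeries.ofPowerSeries_injective).mpr hf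

theorem ordGE_toL_of_le_order {f : k⟦X⟧} {r : ℕ} (hr : (r : ℕ∞) ≤ f.order) :
    ordGE (toL f) r := by
  rw [ordGE_iff_le_orderTop, HahnSeries.le_orderTop_iff_forall]
  intro j hj
  rw [toL, PowerSeries.coeff_coe]
  split_ifs with hneg
  · rfl
  · exact coeff_of_lt_order _ (lt_of_lt_of_le (by norm_cast at hj ⊢; omega) hr)

end Order

section TraceOne

variable {k : Type} [Field k] {G : Type} [Group G] [Fintype G]
  (ρ : G →* (k⟦X⟧ ≃ₐ[k] k⟦X⟧))

theorem derivative_prod_orbit_X_eq_mul (g : G) :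
    d⁄dX k (∏ h, ρ h X) = ρ g (d⁄dX k (∏ h, ρ h X)) * d⁄dX k (ρ g X) := by
  conv_lhs => rw [← algEquiv_apply_prod_orbit ρ X g]
  exact derivative_algHom_apply (ρ g : k⟦X⟧ →ₐ[k] k⟦X⟧) (constantCoeff_algEquiv_X _) _

noncomputable def traceOneElement : LaurentSeries k :=
  toL (∏ g, ρ g X) * (toL X * toL (d⁄dX k (∏ g, ρ g X)))⁻¹

variable {ρ} (ρL : G →* (LaurentSeries k ≃ₐ[k] LaurentSeries k))
  (hρL : ∀ g x, ρL g (toL x) = toL (ρ g x))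
include hρL

theorem algEquiv_apply_traceOneElement [DecidableEq G] (hy' : d⁄dX k (∏ g, ρ g X) ≠ 0)
    (g : G) :
    ρL g (traceOneElement ρ) = toL (∏ h ∈ Finset.univ.erase g, ρ h X)
      * toL (d⁄dX k (ρ g X)) * (toL (d⁄dX k (∏ h, ρ h X)))⁻¹ := by
  have hF : toL (ρ g X) ≠ 0 := toL_ne_zero ((map_ne_zero_iff _ (ρ g).injective).mpr X_ne_zero)
  have hF' : toL (d⁄dX k (ρ g X)) ≠ 0 := toL_ne_zero fun h => hy' (by
    rw [derivative_prod_orbit_X_eq_mul ρ g, h, mul_zero])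
  have hB : toL (ρ g (d⁄dX k (∏ h, ρ h X))) ≠ 0 :=
    toL_ne_zero ((map_ne_zero_iff _ (ρ g).injective).mpr hy')
  have hy : toL (∏ h, ρ h X) = toL (ρ g X) * toL (∏ h ∈ Finset.univ.erase g, ρ h X) := by
    rw [← Finset.mul_prod_erase _ _ (Finset.mem_univ g), toL, toL, toL, map_mul]
  have hdy : toL (d⁄dX k (∏ h, ρ h X))
      = toL (ρ g (d⁄dX k (∏ h, ρ h X))) * toL (d⁄dX k (ρ g X)) := by
    rw [toL, toL, toL, ← map_mul, ← derivative_prod_orbit_X_eq_mul]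
  rw [traceOneElement, map_mul, map_inv₀, map_mul, hρL, hρL, hρL, algEquiv_apply_prod_orbit,
    hy, hdy]
  field_simp

theorem sum_algEquiv_apply_traceOneElement (hy' : d⁄dX k (∏ g, ρ g X) ≠ 0) :
    ∑ g, ρL g (traceOneElement ρ) = 1 := by
  classical
  have hprod : d⁄dX k (∏ h, ρ h X)
      = ∑ g, (∏ h ∈ Finset.univ.erase g, ρ h X) * d⁄dX k (ρ g X) :=
    (d⁄dX k).leibniz_prod _ _
  simp only [algEquiv_apply_traceOneElement ρL hρL hy', ← Finset.sum_mul]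
  rw [← mul_inv_cancel₀ (toL_ne_zero hy')]
  congr 1
  rw [hprod]
  simp only [toL, map_sum, map_mul]

theorem ordGE_algEquiv_apply_traceOneElement {d : ℕ}
    (hd : (d⁄dX k (∏ g, ρ g X)).order = d) (g : G) :
    ordGE (ρL g (traceOneElement ρ)) (Fintype.card G - 1 - d) := by
  classical
  have hy' : d⁄dX k (∏ g, ρ g X) ≠ 0 := fun h => by simp [h] at hd
  rw [algEquiv_apply_traceOneElement ρL hρL hy' g]
  have hP : ordGE (toL (∏ h ∈ Finset.univ.erase g, ρ h X)) (Fintype.card G - 1) := by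
    have horder :
        ((Fintype.card G - 1 : ℕ) : ℕ∞) ≤ (∏ h ∈ Finset.univ.erase g, ρ h X).order := by
      refine le_trans ?_ (le_order_prod _ _)
      have := Finset.card_nsmul_le_sum (Finset.univ.erase g) (fun h => (ρ h X).order) 1
        fun h _ => one_le_order_iff_constCoeff_eq_zero.mpr (constantCoeff_algEquiv_X _)
      simpa [Finset.card_erase_of_mem] using this
    have hcard : ((Fintype.card G - 1 : ℕ) : ℤ) = Fintype.card G - 1 := by
      have := Fintype.card_pos (α := G)
      omega
    simpa [hcard] using ordGE_toL_of_le_order horder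
  have hF' : ordGE (toL (d⁄dX k (ρ g X))) 0 := by
    simpa using ordGE_toL_of_le_order (r := 0) bot_le
  have hinv : ordGE (toL (d⁄dX k (∏ h, ρ h X)))⁻¹ (-d) := by
    refine ordGE_inv_of_coeff_ne_zero ?_
    rw [toL, LaurentSeries.coeff_coe_powerSeries]
    exact (order_eq_nat.mp hd).1
  exact ((hP.mul hF').mul hinv).mono (by omega)

end TraceOne

theorem statement11_general
    (k : Type) [Field k]
    (G : Type) [Group G] [Fintype G]
    (ρ : G →* (PowerSeries k ≃ₐ[k] PowerSeries k))
    (ρL : G →* (LaurentSeries k ≃ₐ[k] LaurentSeries k))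
    (hρL : ∀ g x, ρL g (toL x) = toL (ρ g x))
    (yG : PowerSeries k) (hyG : yG = ∏ g : G, ρ g PowerSeries.X)
    (d : ℕ) (hd : (PowerSeries.derivative k yG).order = (d : ℕ∞))
    (m n : ℤ) (hbound : (d : ℤ) - (Fintype.card G : ℤ) + 1 ≤ m - n)
    (a : G → LaurentSeries k)
    (ha : ∀ g h : G, a (g * h) = ρL g (a h) + a g)
    (haI : ∀ g : G, ordGE (a g) m) :
    ∃ α : LaurentSeries k, ordGE α n ∧ ∀ g : G, a g = ρL g α - α := by
  subst hyG
  have hy' : d⁄dX k (∏ g, ρ g X) ≠ 0 := fun h => by simp [h] at hd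
  refine ⟨_, ?_, cocycle_eq_coboundary_of_sum_eq_one ρL ha
    (sum_algEquiv_apply_traceOneElement ρL hρL hy')⟩
  refine (ordGESubgroup k n).neg_mem (sum_mem fun h _ => ?_)
  exact ((ordGE_algEquiv_apply_traceOneElement ρL hρL hd h).mul (haI h)).mono (by omega)

/-- **effective additive Hilbert 90.**  Let `d = ord(y_G')` and let
`m ≥ n` be integers with `m − n ≥ d − #G + 1`, defining fractional ideals
`I = t^m·k[[t]] ⊆ J = t^n·k[[t]]`.  Then every `1`-cocycle of `G` with values in `I` is
split by an element of `J`: if `a_{gh} = ρ(g)(a_h) + a_g` and `ord(a_g) ≥ m` for all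
`g`, then there is `α` with `ord(α) ≥ n` and `a_g = ρ(g)(α) − α` for all `g`.
In particular the natural map `H¹(G, I) → H¹(G, J)` is zero. -/
theorem statement11
    (p : ℕ) [Fact p.Prime]
    (k : Type) [Field k] [CharP k p] [PerfectField k]
    (G : Type) [Group G] [Fintype G]
    (ρ : G →* (PowerSeries k ≃ₐ[k] PowerSeries k)) (hρ : Function.Injective ρ)
    (ρL : G →* (LaurentSeries k ≃ₐ[k] LaurentSeries k))
    (hρL : ∀ g x, ρL g (toL x) = toL (ρ g x))
    (yG : PowerSeries k) (hyG : yG = ∏ g : G, ρ g PowerSeries.X)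
    (d : ℕ) (hd : (PowerSeries.derivative k yG).order = (d : ℕ∞))
    (m n : ℤ) (hmn : n ≤ m) (hbound : (d : ℤ) - (Fintype.card G : ℤ) + 1 ≤ m - n)
    (a : G → LaurentSeries k)
    (ha : ∀ g h : G, a (g * h) = ρL g (a h) + a g)
    (haI : ∀ g : G, ordGE (a g) m) :
    ∃ α : LaurentSeries k, ordGE α n ∧ ∀ g : G, a g = ρL g α - α :=
  statement11_general k G ρ ρL hρL yG hyG d hd m n hbound a ha haI
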